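/- arXiv:1501.07464 — 2 statements merged into one kernel-verified Lean document; each statement's English description precedes it below -/
import Mathlib

section
/- Let x be a uniformly recurrent aperiodic infinite word containing infinitely many distinct palindromic factors. Then x has infinitely many abelian unbordered factors. -/
def factor {α : Type*} (w : ℕ → α) (i n : ℕ) : List α :=
  (List.range n).map (fun k => w (i + k))

def IsFactor {α : Type*} (u : List α) (w : ℕ → α) : Prop :=
  ∃ i, factor w i u.length = u

def AbelianEquiv {α : Type*} [DecidableEq α] (u v : List α) : Prop :=
  ∀ a : α, u.count a = v.count a

def AbelianBordered {α : Type*} [DecidableEq α] (u : List α) : Prop :=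
  ∃ p s : List α, p <+: u ∧ s <:+ u ∧ p ≠ [] ∧ p.length < u.length ∧ AbelianEquiv p s

/-- `x` is uniformly recurrent: every factor occurs in every window of some length `M`. -/
def UniformlyRecurrent {α : Type*} (x : ℕ → α) : Prop :=
  ∀ u : List α, IsFactor u x → ∃ M, ∀ i, ∃ j, j + u.length ≤ M ∧ factor x (i + j) u.length = u

def UltimatelyPeriodic {α : Type*} (w : ℕ → α) : Prop :=
  ∃ p N, 0 < p ∧ ∀ n, N ≤ n → w (n + p) = w n

/-!
For a palindrome `P` and letters `a ≠ b`, the word `a P b` is abelian unbordered: its prefix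
`a u` has one more `a` than its suffix `(reverse u) b` of the same length. So if the
abelian unbordered factors of `x` have length at most `L`, every palindromic factor of length
at least `L` extends letter by letter to the left, and its occurrence at position `q` yields a
palindromic prefix of `x` of length `|P| + 2q`. Two palindromic prefixes of lengths `m₁ ≤ m₂`
make the shorter one `(m₂ - m₁)`-periodic. By uniform recurrence a long palindrome occurs with
bounded gaps, so `x` has arbitrarily long prefixes with periods from a finite set, and a single
period then works for the whole word. Over an infinite alphabet the single letters already
give infinitely many abelian unbordered factors.
-/

section Words

variable {α : Type*}

@[simp]
lemma factor_length (w : ℕ → α) (i n : ℕ) : (factor w i n).length = n := by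
  simp [factor]

@[simp]
lemma getElem_factor (w : ℕ → α) (i n j : ℕ) (hj : j < (factor w i n).length) :
    (factor w i n)[j] = w (i + j) := by
  simp [factor]

lemma isFactor_factor (w : ℕ → α) (i n : ℕ) : IsFactor (factor w i n) w :=
  ⟨i, by rw [factor_length]⟩

lemma factor_succ (w : ℕ → α) (i n : ℕ) :
    factor w i (n + 1) = w i :: factor w (i + 1) n := by
  simp [factor, List.range_succ_eq_map, Nat.add_assoc, Nat.add_comm 1]

lemma factor_succ' (w : ℕ → α) (i n : ℕ) :
    factor w i (n + 1) = factor w i n ++ [w (i + n)] := by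
  simp [factor, List.range_succ]

lemma factor_add_two (w : ℕ → α) (i m : ℕ) :
    factor w i (m + 2) = w i :: (factor w (i + 1) m ++ [w (i + 1 + m)]) := by
  rw [factor_succ, factor_succ']

lemma UniformlyRecurrent.exists_occurrence {x : ℕ → α} (hx : UniformlyRecurrent x)
    {u : List α} (hu : IsFactor u x) :
    ∃ M, ∀ i, ∃ q, i ≤ q ∧ q ≤ i + M ∧ factor x q u.length = u := by
  obtain ⟨M, hM⟩ := hx u hu
  refine ⟨M, fun i => ?_⟩
  obtain ⟨j, hjM, hj⟩ := hM i
  exact ⟨i + j, by omega, by omega, hj⟩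

lemma finite_setOf_isFactor_length_le {x : ℕ → α} (hx : (Set.range x).Finite) (N : ℕ) :
    {u : List α | IsFactor u x ∧ u.length ≤ N}.Finite := by
  have := hx.to_subtype
  refine ((List.finite_length_le (Set.range x) N).image (List.map Subtype.val)).subset ?_
  rintro u ⟨⟨i, hi⟩, hN⟩
  refine ⟨(List.range u.length).map fun k => ⟨x (i + k), i + k, rfl⟩, by simpa using hN, ?_⟩
  rw [List.map_map]
  exact hi

lemma exists_palindrome_isFactor_length_ge {x : ℕ → α} (hx : (Set.range x).Finite)
    (hpal : {u : List α | IsFactor u x ∧ u.reverse = u}.Infinite) (N : ℕ) :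
    ∃ u : List α, IsFactor u x ∧ u.reverse = u ∧ N ≤ u.length := by
  by_contra! h
  exact hpal ((finite_setOf_isFactor_length_le hx N).subset
    fun u ⟨hu, hrev⟩ => ⟨hu, (h u hu hrev).le⟩)

lemma ultimatelyPeriodic_of_bounded_periods {w : ℕ → α} (D : ℕ)
    (h : ∀ N, ∃ p, 0 < p ∧ p ≤ D ∧ ∀ j < N, w (j + p) = w j) :
    UltimatelyPeriodic w := by
  choose p hp_pos hpD hper using h
  obtain ⟨p₀, hp₀⟩ := Finite.exists_infinite_fiber
    fun N => (⟨p N, Nat.lt_succ_of_le (hpD N)⟩ : Fin (D + 1))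
  simp only [Set.infinite_coe_iff, Set.preimage, Set.mem_singleton_iff, Fin.ext_iff] at hp₀
  obtain ⟨N, hN⟩ := hp₀.nonempty
  refine ⟨p₀, 0, hN ▸ hp_pos N, fun j _ => ?_⟩
  obtain ⟨N', hN', hjN'⟩ := hp₀.exists_gt j
  exact hN' ▸ hper N' j hjN'

lemma eq_of_reverse_factor_zero_eq {x : ℕ → α} {m : ℕ}
    (h : (factor x 0 m).reverse = factor x 0 m) {j : ℕ} (hj : j < m) : x j = x (m - 1 - j) := by
  have h' : (factor x 0 m).reverse[j]'(by simpa) = (factor x 0 m)[j]'(by simpa) := by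
    simp only [h]
  simpa [List.getElem_reverse] using h'.symm

lemma periodic_of_palindromic_prefixes {x : ℕ → α} {m₁ m₂ : ℕ}
    (h₁ : (factor x 0 m₁).reverse = factor x 0 m₁)
    (h₂ : (factor x 0 m₂).reverse = factor x 0 m₂)
    (hm : m₁ ≤ m₂) {j : ℕ} (hj : j < m₁) : x (j + (m₂ - m₁)) = x j := by
  rw [eq_of_reverse_factor_zero_eq h₁ hj,
    eq_of_reverse_factor_zero_eq h₂ (by omega : m₁ - 1 - j < m₂)]
  congr 1
  omega

section AbelianBorder

variable [DecidableEq α]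

lemma AbelianEquiv.length_eq {u v : List α} (h : AbelianEquiv u v) : u.length = v.length := by
  have : (u : Multiset α) = v := Multiset.ext.mpr fun a => by simpa using h a
  simpa using congrArg Multiset.card this

lemma not_abelianBordered_singleton (a : α) : ¬ AbelianBordered [a] := by
  rintro ⟨p, -, -, -, hp, hlt, -⟩
  simp_all

lemma not_abelianBordered_cons_append_singleton {P : List α} (hP : P.reverse = P) {a b : α}
    (hab : a ≠ b) : ¬ AbelianBordered (a :: (P ++ [b])) := by
  rintro ⟨p, s, hpre, hsuf, hne, hlt, heq⟩
  obtain ⟨k, hk⟩ : ∃ k, p.length = k + 1 := Nat.exists_eq_succ_of_ne_zero (by simpa using hne)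
  have hkP : k ≤ P.length := by simp at hlt; omega
  have hp : p = a :: P.take k := by
    rw [List.prefix_iff_eq_take.mp hpre, hk]
    simp [List.take_append_of_le_length hkP]
  have hs : s = (P.take k).reverse ++ [b] := by
    rw [List.suffix_iff_eq_drop.mp hsuf, ← heq.length_eq, hk,
      show (a :: (P ++ [b])).length - (k + 1) = P.length - k + 1 by simp; omega,
      List.drop_succ_cons, List.drop_append_of_le_length (by omega), List.reverse_take, hP]
  have hcount := heq a
  simp [hp, hs, List.count_cons, List.count_append, List.count_reverse] at hcount
  exact hab hcount.symm

end AbelianBorder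

section BoundedUnbordered

variable [DecidableEq α] {x : ℕ → α} {L : ℕ}
  (hL : ∀ u : List α, IsFactor u x → ¬ AbelianBordered u → u.length ≤ L)
include hL

lemma reverse_factor_add_two_eq {i m : ℕ} (hm : L ≤ m)
    (h : (factor x (i + 1) m).reverse = factor x (i + 1) m) :
    (factor x i (m + 2)).reverse = factor x i (m + 2) := by
  rw [factor_add_two]
  by_cases hab : x i = x (i + 1 + m)
  · simp [hab, h]
  · have := hL _ (factor_add_two x i m ▸ isFactor_factor x i (m + 2))
      (not_abelianBordered_cons_append_singleton h hab)
    simp at this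
    omega

lemma reverse_factor_zero_add_two_mul_eq {i m : ℕ} (hm : L ≤ m)
    (h : (factor x i m).reverse = factor x i m) :
    (factor x 0 (m + 2 * i)).reverse = factor x 0 (m + 2 * i) := by
  induction i generalizing m with
  | zero => exact h
  | succ i ih =>
    rw [show m + 2 * (i + 1) = m + 2 + 2 * i by ring]
    exact ih (by omega) (reverse_factor_add_two_eq hL hm h)

lemma ultimatelyPeriodic_of_palindrome (hur : UniformlyRecurrent x) {P : List α}
    (hP : IsFactor P x) (hPpal : P.reverse = P) (hPL : L ≤ P.length) : UltimatelyPeriodic x := by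
  obtain ⟨M, hM⟩ := hur.exists_occurrence hP
  have hprefix {q : ℕ} (hq : factor x q P.length = P) :
      (factor x 0 (P.length + 2 * q)).reverse = factor x 0 (P.length + 2 * q) :=
    reverse_factor_zero_add_two_mul_eq hL hPL (by rwa [hq])
  refine ultimatelyPeriodic_of_bounded_periods (2 * (M + 1)) fun N => ?_
  obtain ⟨q₁, hNq₁, hq₁N, hq₁⟩ := hM N
  obtain ⟨q₂, hq₁q₂, hq₂q₁, hq₂⟩ := hM (q₁ + 1)
  refine ⟨2 * (q₂ - q₁), by omega, by omega, fun j hj => ?_⟩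
  have := periodic_of_palindromic_prefixes (hprefix hq₁) (hprefix hq₂) (by omega)
    (by omega : j < P.length + 2 * q₁)
  rwa [show P.length + 2 * q₂ - (P.length + 2 * q₁) = 2 * (q₂ - q₁) by omega] at this

end BoundedUnbordered

end Words

/-- A uniformly recurrent aperiodic word with infinitely many palindromic factors
has infinitely many abelian unbordered factors. -/
theorem stmt_13 {α : Type*} [DecidableEq α] (x : ℕ → α)
    (hur : UniformlyRecurrent x) (hap : ¬ UltimatelyPeriodic x)
    (hpal : {u : List α | IsFactor u x ∧ u.reverse = u}.Infinite) :
    {u : List α | IsFactor u x ∧ ¬ AbelianBordered u}.Infinite := by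
  intro hfin
  by_cases hrange : (Set.range x).Finite
  · obtain ⟨L, hL⟩ := (hfin.image List.length).bddAbove
    obtain ⟨P, hP, hPpal, hPL⟩ := exists_palindrome_isFactor_length_ge hrange hpal L
    exact hap (ultimatelyPeriodic_of_palindrome (fun u hu hub => hL ⟨u, ⟨hu, hub⟩, rfl⟩)
      hur hP hPpal hPL)
  · refine hrange (hfin.subset ?_ |>.of_finite_image (List.singleton_injective.injOn))
    rintro _ ⟨_, ⟨i, rfl⟩, rfl⟩
    exact ⟨⟨i, rfl⟩, not_abelianBordered_singleton _⟩
end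

section
/- If u is an unbordered finite word and v is a non-empty proper prefix of u, then vu is unbordered. Moreover, this fails in the abelian setting: v = 01 is a proper prefix of the abelian unbordered word u = 010011, yet vu = 01010011 is abelian bordered. -/
def Unbordered {α : Type*} (u : List α) : Prop :=
  ¬ ∃ p : List α, p ≠ [] ∧ p.length < u.length ∧ p <+: u ∧ p <:+ u

/-- If `v` is a non-empty proper prefix of an unbordered word `u` then `vu` is unbordered;
this fails in the abelian setting, as witnessed by `v = 01` and `u = 010011`. -/
theorem stmt_16 :
    (∀ (α : Type) (u v : List α), Unbordered u → v ≠ [] → v <+: u → v ≠ u →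
      Unbordered (v ++ u)) ∧
    (¬ AbelianBordered ([0,1,0,0,1,1] : List ℕ)) ∧
    AbelianBordered (([0,1] : List ℕ) ++ [0,1,0,0,1,1]) := by
  refine ⟨?_, ?_, ?_⟩
  · intro α u v hu hv hvu hne
    rintro ⟨p, hp0, hplen, hpre, hsuf⟩
    apply hu
    have hvlt : v.length < u.length := by
      rcases lt_or_eq_of_le hvu.length_le with h | h
      · exact h
      · exact absurd (List.prefix_iff_eq_take.mp hvu |>.trans
          (by rw [h, List.take_length])) hne
    have hv0 : 0 < v.length := List.length_pos_iff.mpr hv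
    rw [List.length_append] at hplen
    by_cases hle : p.length ≤ v.length
    · refine ⟨p, hp0, lt_of_le_of_lt hle hvlt, ?_, ?_⟩
      · exact (List.prefix_of_prefix_length_le hpre (List.prefix_append v u) hle).trans hvu
      · exact List.suffix_of_suffix_length_le hsuf (List.suffix_append v u)
          (le_of_lt (lt_of_le_of_lt hle hvlt))
    · push_neg at hle
      refine ⟨p.drop v.length, ?_, ?_, ?_, ?_⟩
      · intro h
        have := congrArg List.length h
        simp at this
        omega
      · simp; omega
      · obtain ⟨t, ht⟩ := hpre
        refine ⟨t, ?_⟩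
        have := congrArg (List.drop v.length) ht
        rwa [List.drop_left, List.drop_append_of_le_length hle.le] at this
      · exact List.suffix_of_suffix_length_le
          ((List.drop_suffix _ _).trans hsuf) (List.suffix_append v u)
          (by simp; omega)
  · rintro ⟨p, s, hp, hs, hne, hlen, heq⟩
    have hperm : p.Perm s := List.perm_iff_count.mpr heq
    have hd : ¬ ∃ p ∈ ([0,1,0,0,1,1] : List ℕ).inits,
        ∃ s ∈ ([0,1,0,0,1,1] : List ℕ).tails,
        p ≠ [] ∧ p.length < 6 ∧ p.Perm s := by decide
    exact hd ⟨p, (List.mem_inits _ _).mpr hp, s, (List.mem_tails _ _).mpr hs, hne,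
      by simpa using hlen, hperm⟩
  · exact ⟨[0,1,0,1], [0,0,1,1], by decide, by decide, by decide, by decide,
      fun a => List.Perm.count_eq (by decide) a⟩
end
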